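/- arXiv:2411.19003 — 2 statements merged into one kernel-verified Lean document; each statement's English description precedes it below -/
import Mathlib

section
/- (Product of Projections Lemma) Let A be an m × n boolean matrix and p a positive integer, let T ≥ 0 be a real, let R ⊆ {0,…,mp−1} be an m,T,p-equipartitioned selection of rows of A^{⊘p}, and let C ⊆ {0,…,n^p−1} be a selection of columns of A^{⊘p}. For any partition R = R₁ ∪ R₂ into two disjoint parts, one can write p = ℓ₁ + ℓ₂ such that for each i ∈ {1,2} there exist S_i ⊆ {0,…,mℓ_i−1} and D_i ⊆ {0,…,n^{ℓ_i}−1} satisfying: S_i is m,T/2,ℓ_i-equipartitioned, |D₁|·|D₂| ≥ |C|, and A^{⊘ℓ_i}[S_i,D_i] is a subgame of A^{⊘p}[R_i,C]. -/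
/-- A deterministic two-party communication protocol over `X × Y` with range `Z`:
a binary tree whose internal nodes are labeled by a function of the row player's
input or of the column player's input, and whose leaves are labeled by outputs. -/
inductive Protocol (X Y Z : Type) : Type where
  | leaf : Z → Protocol X Y Z
  | nodeA : (X → Bool) → Protocol X Y Z → Protocol X Y Z → Protocol X Y Z
  | nodeB : (Y → Bool) → Protocol X Y Z → Protocol X Y Z → Protocol X Y Z

namespace Protocol

/-- The value computed by a protocol on input `(x, y)`. -/
def eval {X Y Z : Type} : Protocol X Y Z → X → Y → Z
  | leaf z, _, _ => z
  | nodeA a l r, x, y => if a x then (r.eval x y) else (l.eval x y)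
  | nodeB b l r, x, y => if b y then (r.eval x y) else (l.eval x y)

/-- The depth (cost) of a protocol. -/
def depth {X Y Z : Type} : Protocol X Y Z → ℕ
  | leaf _ => 0
  | nodeA _ l r => max (depth l) (depth r) + 1
  | nodeB _ l r => max (depth l) (depth r) + 1

end Protocol

/-- A protocol computes `f` if its output on every input `(x, y)` is `f x y`. -/
def Computes {X Y Z : Type} (P : Protocol X Y Z) (f : X → Y → Z) : Prop :=
  ∀ x y, P.eval x y = f x y

/-- Deterministic communication complexity: the minimum depth of a protocol computing `f`. -/
noncomputable def commC {X Y Z : Type} (f : X → Y → Z) : ℕ :=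
  sInf {d : ℕ | ∃ P : Protocol X Y Z, Computes P f ∧ P.depth = d}

/-- Communication complexity of a boolean matrix. -/
noncomputable def matD {m n : ℕ} (M : Matrix (Fin m) (Fin n) Bool) : ℕ :=
  commC (fun i j => M i j)

/-- The direct sum `f^ℓ` of a two-argument function. -/
def directSum {X Y Z : Type} (f : X → Y → Z) (ℓ : ℕ) :
    (Fin ℓ → X) → (Fin ℓ → Y) → (Fin ℓ → Z) :=
  fun x y i => f (x i) (y i)

/-- The interlacing operation on functions: `f^{⊘k} ((i,x), (y₁,…,y_k)) = f (x, y_i)`. -/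
def funInterlace {X Y : Type} (f : X → Y → Bool) (k : ℕ) :
    (Fin k × X) → (Fin k → Y) → Bool :=
  fun ix ys => f ix.2 (ys ix.1)

/-- The interlacing operation on matrices: `A^{⊘p}` is the `mp × n^p` matrix whose
entry at `(i, j)` is `A (i % m) ((j / n^⌊i/m⌋) % n)`. -/
def interlace {m n : ℕ} (A : Matrix (Fin m) (Fin n) Bool) (p : ℕ) :
    Matrix (Fin (m * p)) (Fin (n ^ p)) Bool :=
  Matrix.of fun i j =>
    have hm : 0 < m := by
      rcases Nat.eq_zero_or_pos m with h | h
      · exact absurd i.isLt (by simp [h])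
      · exact h
    have hp : 0 < p := by
      rcases Nat.eq_zero_or_pos p with h | h
      · exact absurd i.isLt (by simp [h])
      · exact h
    have hn : 0 < n := by
      rcases Nat.eq_zero_or_pos n with h | h
      · exact absurd j.isLt (by simp [h, Nat.zero_pow hp])
      · exact h
    A ⟨(i : ℕ) % m, Nat.mod_lt _ hm⟩ ⟨((j : ℕ) / n ^ ((i : ℕ) / m)) % n, Nat.mod_lt _ hn⟩

/-- Extraction of the rows `R` and columns `C` of a matrix (in sorted order). -/
def extract {m n : ℕ} (A : Matrix (Fin m) (Fin n) Bool)
    (R : Finset (Fin m)) (C : Finset (Fin n)) :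
    Matrix (Fin R.card) (Fin C.card) Bool :=
  Matrix.of fun i j => A (R.orderIsoOfFin rfl i).1 (C.orderIsoOfFin rfl j).1

/-- `G` is a subgame of `H`: a copy of `G` appears in `H` (on some rows and columns). -/
def Subgame {a b c d : ℕ} (G : Matrix (Fin a) (Fin b) Bool)
    (H : Matrix (Fin c) (Fin d) Bool) : Prop :=
  ∃ (σ : Fin a → Fin c) (τ : Fin b → Fin d),
    Function.Injective σ ∧ Function.Injective τ ∧ ∀ i j, G i j = H (σ i) (τ j)

/-- `R ⊆ {0,…,mp−1}` is `m,T,p`-equipartitioned: every block `[mγ, m(γ+1))` contains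
exactly `⌈T⌉` selected rows. -/
def Equipartitioned (m : ℕ) (T : ℝ) (p : ℕ) (R : Finset (Fin (m * p))) : Prop :=
  ∀ γ < p, (R.filter (fun r : Fin (m * p) => m * γ ≤ (r : ℕ) ∧ (r : ℕ) < m * (γ + 1))).card = ⌈T⌉₊

/-- `D(⟨M,p,x,y⟩)`: the minimum communication complexity over the bracket set, the set of
extractions of `M^{⊘⌈p⌉}` along an `m,⌈mx⌉,⌈p⌉`-equipartitioned row selection and a column
selection of size `⌈n^⌈p⌉·y⌉`.  (Non-integer numbers of interlaced copies are rounded up.) -/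
noncomputable def bracketD {m n : ℕ} (M : Matrix (Fin m) (Fin n) Bool)
    (p x y : ℝ) : ℕ :=
  sInf { d : ℕ | ∃ (R : Finset (Fin (m * ⌈p⌉₊))) (C : Finset (Fin (n ^ ⌈p⌉₊))),
    Equipartitioned m ((m : ℝ) * x) ⌈p⌉₊ R ∧
    C.card = ⌈(n : ℝ) ^ (⌈p⌉₊ : ℕ) * y⌉₊ ∧
    d = matD (extract (interlace M ⌈p⌉₊) R C) }

/-- Dimensions of the alternating communication game `φ_i`. -/
def phiDim (B : ℕ) : ℕ → ℕ × ℕ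
  | 0 => (1, 2)
  | i + 1 => ((phiDim B i).2 ^ B, (phiDim B i).1 * B)

/-- The alternating communication game family: `φ₀ = [1 0]`, `φ_{i+1} = (φ_i^{⊘B})ᵀ`. -/
def phi (B : ℕ) : (i : ℕ) → Matrix (Fin (phiDim B i).1) (Fin (phiDim B i).2) Bool
  | 0 => Matrix.of ![![true, false]]
  | i + 1 => (interlace (phi B i) B).transpose

-- The row part `S` of the `Q`-projection of `(R, C)`.
open Classical in
noncomputable def rowProj {m p : ℕ} (Q : Finset (Fin p)) (R : Finset (Fin (m * p))) :
    Finset (Fin (m * Q.card)) :=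
  Finset.univ.filter (fun s : Fin (m * Q.card) =>
    ∃ r ∈ R, (r : ℕ) % m = (s : ℕ) % m ∧
      (r : ℕ) / m = ((Q.orderIsoOfFin rfl ⟨(s : ℕ) / m,
        Nat.div_lt_of_lt_mul s.isLt⟩).1 : ℕ))

-- The column part `D` of the `Q`-projection of `(R, C)`: the set of numbers whose base-`n`
-- digits are the digits of some `c ∈ C` at the positions of `Q` (in increasing order).
open Classical in
noncomputable def colProj {n p : ℕ} (Q : Finset (Fin p)) (C : Finset (Fin (n ^ p))) :
    Finset (Fin (n ^ Q.card)) :=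
  Finset.univ.filter (fun d : Fin (n ^ Q.card) =>
    ∃ c ∈ C, ∀ γ : Fin Q.card,
      (d : ℕ) / n ^ (γ : ℕ) % n =
        (c : ℕ) / n ^ (((Q.orderIsoOfFin rfl γ).1 : ℕ)) % n)

section ProductOfProjectionsAux

lemma sum_digits_lt {n : ℕ} (a : ℕ → ℕ) (ha : ∀ i, a i < n) :
    ∀ ℓ, (∑ γ ∈ Finset.range ℓ, a γ * n ^ γ) < n ^ ℓ := by
  intro ℓ
  induction ℓ with
  | zero => simp
  | succ ℓ ih =>
    rw [Finset.sum_range_succ]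
    calc (∑ γ ∈ Finset.range ℓ, a γ * n ^ γ) + a ℓ * n ^ ℓ
        < n ^ ℓ + a ℓ * n ^ ℓ := by omega
      _ = (a ℓ + 1) * n ^ ℓ := by ring
      _ ≤ n * n ^ ℓ := Nat.mul_le_mul_right _ (ha ℓ)
      _ = n ^ (ℓ + 1) := by ring

lemma sum_digits_div_mod {n : ℕ} (a : ℕ → ℕ) (ha : ∀ i, a i < n) :
    ∀ ℓ j, j < ℓ → (∑ γ ∈ Finset.range ℓ, a γ * n ^ γ) / n ^ j % n = a j := by
  have hn : 0 < n := Nat.pos_of_ne_zero fun h => by simpa [h] using ha 0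
  intro ℓ
  induction ℓ with
  | zero => omega
  | succ ℓ ih =>
    intro j hj
    rw [Finset.sum_range_succ]
    rcases Nat.lt_or_ge j ℓ with h | h
    · have hpow : n ^ ℓ = n ^ (ℓ - j - 1) * n * n ^ j := by
        rw [mul_assoc, ← pow_succ', ← pow_add]; congr 1; omega
      have hd : a ℓ * n ^ ℓ = (a ℓ * (n ^ (ℓ - j - 1) * n)) * n ^ j := by
        rw [hpow]; ring
      rw [hd, Nat.add_mul_div_right _ _ (pow_pos hn j),
        ← mul_assoc, Nat.add_mul_mod_self_right]
      exact ih j h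
    · have hj' : ℓ = j := by omega
      subst hj'
      have hS := sum_digits_lt a ha ℓ
      rw [Nat.add_mul_div_right _ _ (pow_pos hn ℓ), Nat.div_eq_of_lt hS]
      simpa using Nat.mod_eq_of_lt (ha ℓ)

lemma eq_of_digits_eq {n : ℕ} : ∀ ℓ, ∀ x y : ℕ, x < n ^ ℓ → y < n ^ ℓ →
    (∀ γ < ℓ, x / n ^ γ % n = y / n ^ γ % n) → x = y := by
  intro ℓ
  induction ℓ with
  | zero => intro x y hx hy _; simp at hx hy; omega
  | succ ℓ ih =>
    intro x y hx hy h
    have hn : 0 < n := by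
      rcases Nat.eq_zero_or_pos n with h0 | h0
      · simp [h0] at hx
      · exact h0
    have h0 := h 0 (by omega)
    simp at h0
    have hx' : x / n < n ^ ℓ := Nat.div_lt_of_lt_mul (by rw [mul_comm]; rw [pow_succ] at hx; exact hx)
    have hy' : y / n < n ^ ℓ := Nat.div_lt_of_lt_mul (by rw [mul_comm]; rw [pow_succ] at hy; exact hy)
    have key : x / n = y / n := by
      refine ih (x / n) (y / n) hx' hy' (fun γ hγ => ?_)
      have := h (γ + 1) (by omega)
      rwa [Nat.div_div_eq_div_mul, Nat.div_div_eq_div_mul, ← pow_succ']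
    have hk : n * (x / n) = n * (y / n) := by rw [key]
    have := Nat.div_add_mod x n
    have := Nat.div_add_mod y n
    omega

noncomputable def digOf {p : ℕ} (n : ℕ) (Q : Finset (Fin p)) (c : ℕ) : ℕ → ℕ :=
  fun γ => if h : γ < Q.card then
    c / n ^ (((Q.orderIsoOfFin rfl ⟨γ, h⟩ : {x // x ∈ Q}) : Fin p) : ℕ) % n else 0

lemma digOf_lt {p : ℕ} {n : ℕ} (hn : 0 < n) (Q : Finset (Fin p)) (c : ℕ) (i : ℕ) :
    digOf n Q c i < n := by
  unfold digOf; split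
  · exact Nat.mod_lt _ hn
  · exact hn

noncomputable def projFin {n p : ℕ} (Q : Finset (Fin p)) (c : Fin (n ^ p)) :
    Fin (n ^ Q.card) :=
  if hn : 0 < n then
    ⟨∑ γ ∈ Finset.range Q.card, digOf n Q (c : ℕ) γ * n ^ γ,
      sum_digits_lt _ (digOf_lt hn Q (c : ℕ)) _⟩
  else if h : Q.card = 0 then ⟨0, by simp [h]⟩
  else by
    have hp : 0 < p := by
      have := Q.card_le_univ
      simp only [Finset.card_univ, Fintype.card_fin] at this
      omega
    have hn0 : n = 0 := by omega
    exact absurd c.isLt (by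
      have : n ^ p = 0 := by rw [hn0]; exact Nat.zero_pow hp
      omega)

lemma projFin_digit {n p : ℕ} (Q : Finset (Fin p)) (c : Fin (n ^ p)) (γ : Fin Q.card) :
    (projFin Q c : ℕ) / n ^ (γ : ℕ) % n
      = (c : ℕ) / n ^ (((Q.orderIsoOfFin rfl γ : {x // x ∈ Q}) : Fin p) : ℕ) % n := by
  have hn : 0 < n := by
    rcases Nat.eq_zero_or_pos n with h0 | h0
    · exfalso
      have hQ : 0 < Q.card := γ.pos
      have hp : 0 < p := by
        have := Q.card_le_univ
        simp only [Finset.card_univ, Fintype.card_fin] at this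
        omega
      exact absurd c.isLt (by
        have : n ^ p = 0 := by rw [h0]; exact Nat.zero_pow hp
        omega)
    · exact h0
  simp only [projFin, dif_pos hn]
  rw [sum_digits_div_mod _ (digOf_lt hn Q (c : ℕ)) _ _ γ.isLt]
  simp [digOf, γ.isLt]

def liftRow {m p : ℕ} (Q : Finset (Fin p)) (s : Fin (m * Q.card)) : Fin (m * p) :=
  have hm : 0 < m := by
    rcases Nat.eq_zero_or_pos m with h | h
    · exact absurd s.isLt (by simp [h])
    · exact h
  ⟨m * (((Q.orderIsoOfFin rfl ⟨(s : ℕ) / m, Nat.div_lt_of_lt_mul s.isLt⟩ :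
      {x // x ∈ Q}) : Fin p) : ℕ) + (s : ℕ) % m, by
    set g : ℕ := (((Q.orderIsoOfFin rfl ⟨(s : ℕ) / m, Nat.div_lt_of_lt_mul s.isLt⟩ :
      {x // x ∈ Q}) : Fin p) : ℕ) with hg
    have h1 : (s : ℕ) % m < m := Nat.mod_lt _ hm
    have h2 : g < p := (((Q.orderIsoOfFin rfl ⟨(s : ℕ) / m, Nat.div_lt_of_lt_mul s.isLt⟩ :
      {x // x ∈ Q}) : Fin p)).isLt
    calc m * g + (s:ℕ) % m < m * g + m := by omega
      _ = m * (g + 1) := by ring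
      _ ≤ m * p := Nat.mul_le_mul_left m (by omega)⟩

lemma liftRow_mod {m p : ℕ} (Q : Finset (Fin p)) (s : Fin (m * Q.card)) :
    (liftRow Q s : ℕ) % m = (s : ℕ) % m := by
  simp [liftRow, Nat.mul_add_mod, Nat.mod_mod]

lemma liftRow_div {m p : ℕ} (Q : Finset (Fin p)) (s : Fin (m * Q.card)) :
    (liftRow Q s : ℕ) / m
      = (((Q.orderIsoOfFin rfl ⟨(s : ℕ) / m, Nat.div_lt_of_lt_mul s.isLt⟩ :
          {x // x ∈ Q}) : Fin p) : ℕ) := by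
  have hm : 0 < m := by
    rcases Nat.eq_zero_or_pos m with h | h
    · exact absurd s.isLt (by simp [h])
    · exact h
  simp [liftRow, Nat.mul_add_div hm, Nat.div_eq_of_lt (Nat.mod_lt (s:ℕ) hm)]

lemma liftRow_inj {m p : ℕ} (Q : Finset (Fin p)) : Function.Injective (liftRow (m := m) Q) := by
  intro s s' h
  have hm : 0 < m := by
    rcases Nat.eq_zero_or_pos m with h0 | h0
    · exact absurd s.isLt (by simp [h0])
    · exact h0
  have h1 : (s : ℕ) % m = (s' : ℕ) % m := by
    rw [← liftRow_mod Q s, ← liftRow_mod Q s', h]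
  have h2 := liftRow_div Q s
  have h3 := liftRow_div Q s'
  rw [h] at h2
  have h4 : ((Q.orderIsoOfFin rfl ⟨(s : ℕ) / m, Nat.div_lt_of_lt_mul s.isLt⟩ : {x // x ∈ Q}) : Fin p)
      = ((Q.orderIsoOfFin rfl ⟨(s' : ℕ) / m, Nat.div_lt_of_lt_mul s'.isLt⟩ : {x // x ∈ Q}) : Fin p) := by
    exact Fin.ext (h2.symm.trans h3)
  have h5 : (⟨(s : ℕ) / m, Nat.div_lt_of_lt_mul s.isLt⟩ : Fin Q.card)
      = ⟨(s' : ℕ) / m, Nat.div_lt_of_lt_mul s'.isLt⟩ := by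
    apply (Q.orderIsoOfFin rfl).injective
    exact Subtype.ext h4
  have h6 : (s : ℕ) / m = (s' : ℕ) / m := by simpa using h5
  have := Nat.div_add_mod (s : ℕ) m
  have := Nat.div_add_mod (s' : ℕ) m
  have hmm : m * ((s:ℕ)/m) = m * ((s':ℕ)/m) := by rw [h6]
  exact Fin.ext (by omega)

lemma block_iff {m : ℕ} (hm : 0 < m) (r γ : ℕ) :
    (m * γ ≤ r ∧ r < m * (γ + 1)) ↔ r / m = γ := by
  constructor
  · rintro ⟨h1, h2⟩
    exact Nat.div_eq_of_lt_le (by rw [mul_comm]; exact h1) (by rw [mul_comm]; exact h2)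
  · intro h
    have h1 := Nat.div_add_mod r m
    have h2 : r % m < m := Nat.mod_lt _ hm
    rw [h] at h1
    have h3 : m * (γ + 1) = m * γ + m := by ring
    omega

lemma interlace_apply' {m n p : ℕ} (A : Matrix (Fin m) (Fin n) Bool)
    (i : Fin (m * p)) (j : Fin (n ^ p)) (a : Fin m) (b : Fin n)
    (h1 : (a : ℕ) = (i : ℕ) % m) (h2 : (b : ℕ) = (j : ℕ) / n ^ ((i : ℕ) / m) % n) :
    interlace A p i j = A a b := by
  obtain ⟨a, ha⟩ := a
  obtain ⟨b, hb⟩ := b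
  simp only at h1 h2
  subst h1; subst h2
  rfl

end ProductOfProjectionsAux

open Classical in
lemma proj_subgame {m n p : ℕ} (A : Matrix (Fin m) (Fin n) Bool)
    (t : ℕ) (R₁ : Finset (Fin (m * p))) (C : Finset (Fin (n ^ p))) (Q : Finset (Fin p))
    (hR₁ : ∀ γ ∈ Q, t ≤ (R₁.filter (fun r : Fin (m * p) =>
        m * (γ : ℕ) ≤ (r : ℕ) ∧ (r : ℕ) < m * ((γ : ℕ) + 1))).card) :
    ∃ S : Finset (Fin (m * Q.card)),
      (∀ γ < Q.card, (S.filter (fun r : Fin (m * Q.card) =>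
          m * γ ≤ (r : ℕ) ∧ (r : ℕ) < m * (γ + 1))).card = t) ∧
      Subgame (extract (interlace A Q.card) S (C.image (projFin Q)))
        (extract (interlace A p) R₁ C) := by
  classical
  have hch : ∀ γ : Fin p, ∃ B : Finset (Fin (m * p)),
      B ⊆ R₁.filter (fun r : Fin (m * p) =>
        m * (γ : ℕ) ≤ (r : ℕ) ∧ (r : ℕ) < m * ((γ : ℕ) + 1)) ∧ (γ ∈ Q → B.card = t) := by
    intro γ
    by_cases hγ : γ ∈ Q
    · obtain ⟨B, hB1, hB2⟩ := Finset.exists_subset_card_eq (hR₁ γ hγ)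
      exact ⟨B, hB1, fun _ => hB2⟩
    · exact ⟨∅, by simp, fun h => absurd h hγ⟩
  choose B hBsub hBcard using hch
  set D := C.image (projFin Q) with hD
  set S : Finset (Fin (m * Q.card)) := Finset.univ.filter
    (fun s : Fin (m * Q.card) => liftRow Q s ∈
      B ((Q.orderIsoOfFin rfl ⟨(s : ℕ) / m, Nat.div_lt_of_lt_mul s.isLt⟩ :
        {x // x ∈ Q}) : Fin p)) with hSdef
  have hmemS : ∀ s : Fin (m * Q.card), s ∈ S ↔ liftRow Q s ∈
      B ((Q.orderIsoOfFin rfl ⟨(s : ℕ) / m, Nat.div_lt_of_lt_mul s.isLt⟩ :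
        {x // x ∈ Q}) : Fin p) := by
    intro s; rw [hSdef, Finset.mem_filter]; exact ⟨fun h => h.2, fun h => ⟨Finset.mem_univ _, h⟩⟩
  have hSR : ∀ s ∈ S, liftRow Q s ∈ R₁ := by
    intro s hs
    exact Finset.mem_of_mem_filter _ (hBsub _ ((hmemS s).1 hs))
  refine ⟨S, ?_, ?_⟩
  · -- equipartition counts
    intro γ hγ
    rcases Nat.eq_zero_or_pos m with hm | hm
    · -- degenerate m = 0
      have hQpos : 0 < Q.card := by omega
      obtain ⟨γ₀, hγ₀⟩ := Finset.card_pos.mp hQpos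
      have ht := hR₁ γ₀ hγ₀
      have hmp : m * p = 0 := by rw [hm]; ring
      have h1 : (R₁.filter (fun r : Fin (m * p) =>
          m * (γ₀ : ℕ) ≤ (r : ℕ) ∧ (r : ℕ) < m * ((γ₀ : ℕ) + 1))).card ≤ m * p := by
        refine le_trans (Finset.card_le_card (Finset.filter_subset _ _)) ?_
        refine le_trans (Finset.card_le_univ R₁) ?_
        simp
      have hmq : m * Q.card = 0 := by rw [hm]; ring
      have h2 : (S.filter (fun r : Fin (m * Q.card) =>
          m * γ ≤ (r : ℕ) ∧ (r : ℕ) < m * (γ + 1))).card ≤ m * Q.card := by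
        refine le_trans (Finset.card_le_card (Finset.filter_subset _ _)) ?_
        refine le_trans (Finset.card_le_univ S) ?_
        simp
      omega
    · set γF : Fin Q.card := ⟨γ, hγ⟩ with hγF
      have hQF : ((Q.orderIsoOfFin rfl γF : {x // x ∈ Q}) : Fin p) ∈ Q :=
        (Q.orderIsoOfFin rfl γF).2
      rw [← hBcard _ hQF]
      apply Finset.card_bij (fun s _ => liftRow Q s)
      · intro s hs
        rw [Finset.mem_filter] at hs
        obtain ⟨hs1, hs2⟩ := hs
        have hdiv : (s : ℕ) / m = γ := (block_iff hm _ _).1 hs2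
        have heq : (⟨(s : ℕ) / m, Nat.div_lt_of_lt_mul s.isLt⟩ : Fin Q.card) = γF :=
          Fin.ext hdiv
        have := (hmemS s).1 hs1
        rwa [heq] at this
      · intro s hs s' hs' h
        exact liftRow_inj Q h
      · intro r hr
        have hrR := hBsub _ hr
        rw [Finset.mem_filter] at hrR
        have hrdiv : (r : ℕ) / m =
            (((Q.orderIsoOfFin rfl γF : {x // x ∈ Q}) : Fin p) : ℕ) :=
          (block_iff hm _ _).1 hrR.2
        have hrm : (r : ℕ) % m < m := Nat.mod_lt _ hm
        have hmγ : m * (γ + 1) = m * γ + m := by ring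
        have hsval : m * γ + (r : ℕ) % m < m * Q.card := by
          calc m * γ + (r : ℕ) % m < m * (γ + 1) := by omega
            _ ≤ m * Q.card := Nat.mul_le_mul_left m (by omega)
        set s : Fin (m * Q.card) := ⟨m * γ + (r : ℕ) % m, hsval⟩ with hsdef2
        have hsdiv : (s : ℕ) / m = γ := by
          show (m * γ + (r : ℕ) % m) / m = γ
          rw [Nat.mul_add_div hm, Nat.div_eq_of_lt hrm]
          omega
        have hsmod : (s : ℕ) % m = (r : ℕ) % m := by
          show (m * γ + (r : ℕ) % m) % m = (r : ℕ) % m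
          rw [Nat.mul_add_mod, Nat.mod_mod]
        have heq : (⟨(s : ℕ) / m, Nat.div_lt_of_lt_mul s.isLt⟩ : Fin Q.card) = γF :=
          Fin.ext hsdiv
        have hlift : liftRow Q s = r := by
          apply Fin.ext
          have e1 := liftRow_div Q s
          rw [heq] at e1
          have e2 := liftRow_mod Q s
          have e3 := Nat.div_add_mod (liftRow Q s : ℕ) m
          have e4 := Nat.div_add_mod (r : ℕ) m
          have e6 : m * ((liftRow Q s : ℕ) / m) = m * ((r : ℕ) / m) := by
            rw [e1, hrdiv]
          omega
        refine ⟨s, ?_, hlift⟩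
        rw [Finset.mem_filter]
        constructor
        · rw [hmemS s, heq, hlift]
          exact hr
        · show m * γ ≤ (s : ℕ) ∧ (s : ℕ) < m * (γ + 1)
          have : (s : ℕ) = m * γ + (r : ℕ) % m := rfl
          omega
  · -- subgame
    have hτex : ∀ j : Fin D.card, ∃ c, c ∈ C ∧ projFin Q c =
        ((D.orderIsoOfFin rfl j : {x // x ∈ D}) : Fin (n ^ Q.card)) := by
      intro j
      have hmem := (D.orderIsoOfFin rfl j).2
      obtain ⟨c, hc, hcd⟩ := Finset.mem_image.1 hmem
      exact ⟨c, hc, hcd⟩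
    choose cf hcfC hcfd using hτex
    refine ⟨fun i => (R₁.orderIsoOfFin rfl).symm
        ⟨liftRow Q ((S.orderIsoOfFin rfl i : {x // x ∈ S}) : Fin (m * Q.card)),
          hSR _ (S.orderIsoOfFin rfl i).2⟩,
      fun j => (C.orderIsoOfFin rfl).symm ⟨cf j, hcfC j⟩, ?_, ?_, ?_⟩
    · intro i i' h
      have h1 := congrArg (R₁.orderIsoOfFin rfl) h
      simp only [OrderIso.apply_symm_apply] at h1
      have h2 := congrArg Subtype.val h1
      have h3 := liftRow_inj Q h2
      exact (S.orderIsoOfFin rfl).injective (Subtype.ext h3)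
    · intro j j' h
      have h1 := congrArg (C.orderIsoOfFin rfl) h
      simp only [OrderIso.apply_symm_apply] at h1
      have h2 : cf j = cf j' := congrArg Subtype.val h1
      have h3 : ((D.orderIsoOfFin rfl j : {x // x ∈ D}) : Fin (n ^ Q.card))
          = ((D.orderIsoOfFin rfl j' : {x // x ∈ D}) : Fin (n ^ Q.card)) := by
        rw [← hcfd j, ← hcfd j', h2]
      exact (D.orderIsoOfFin rfl).injective (Subtype.ext h3)
    · intro i j
      set s : Fin (m * Q.card) := ((S.orderIsoOfFin rfl i : {x // x ∈ S}) : Fin (m * Q.card)) with hs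
      set d : Fin (n ^ Q.card) := ((D.orderIsoOfFin rfl j : {x // x ∈ D}) : Fin (n ^ Q.card)) with hd'
      have hm : 0 < m := by
        rcases Nat.eq_zero_or_pos m with h0 | h0
        · exact absurd s.isLt (by simp [h0])
        · exact h0
      have hQpos : 0 < Q.card := by
        rcases Nat.eq_zero_or_pos Q.card with h0 | h0
        · exact absurd s.isLt (by simp [h0])
        · exact h0
      have hn : 0 < n := by
        rcases Nat.eq_zero_or_pos n with h0 | h0
        · refine absurd d.isLt ?_
          have : n ^ Q.card = 0 := by rw [h0]; exact Nat.zero_pow hQpos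
          omega
        · exact h0
      have hdig : ((d : ℕ) / n ^ ((s : ℕ) / m) % n)
          = ((cf j : ℕ) / n ^ ((liftRow Q s : ℕ) / m) % n) := by
        rw [liftRow_div Q s]
        have hdval : (d : ℕ) = (projFin Q (cf j) : ℕ) := congrArg Fin.val (hcfd j).symm
        rw [hdval]
        exact projFin_digit Q (cf j) ⟨(s : ℕ) / m, Nat.div_lt_of_lt_mul s.isLt⟩
      have hL := interlace_apply' A s d
        ⟨(s : ℕ) % m, Nat.mod_lt _ hm⟩
        ⟨(d : ℕ) / n ^ ((s : ℕ) / m) % n, Nat.mod_lt _ hn⟩ rfl rfl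
      have hR := interlace_apply' A (liftRow Q s) (cf j)
        ⟨(s : ℕ) % m, Nat.mod_lt _ hm⟩
        ⟨(d : ℕ) / n ^ ((s : ℕ) / m) % n, Nat.mod_lt _ hn⟩
        (liftRow_mod Q s).symm hdig
      calc extract (interlace A Q.card) S D i j = interlace A Q.card s d := rfl
        _ = interlace A p (liftRow Q s) (cf j) := by rw [hL, hR]
        _ = _ := by
          simp only [extract, Matrix.of_apply, OrderIso.apply_symm_apply]
          rfl

theorem product_of_projections {m n : ℕ} (A : Matrix (Fin m) (Fin n) Bool)
    (p : ℕ) (hp : 0 < p) (T : ℝ) (hT : 0 ≤ T)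
    (R : Finset (Fin (m * p))) (hR : Equipartitioned m T p R)
    (C : Finset (Fin (n ^ p)))
    (R₁ R₂ : Finset (Fin (m * p))) (hpart : R₁ ∪ R₂ = R) (hdisj : Disjoint R₁ R₂) :
    ∃ ℓ₁ ℓ₂ : ℕ, ℓ₁ + ℓ₂ = p ∧
      ∃ (S₁ : Finset (Fin (m * ℓ₁))) (D₁ : Finset (Fin (n ^ ℓ₁)))
        (S₂ : Finset (Fin (m * ℓ₂))) (D₂ : Finset (Fin (n ^ ℓ₂))),
        Equipartitioned m (T / 2) ℓ₁ S₁ ∧ Equipartitioned m (T / 2) ℓ₂ S₂ ∧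
        C.card ≤ D₁.card * D₂.card ∧
        Subgame (extract (interlace A ℓ₁) S₁ D₁) (extract (interlace A p) R₁ C) ∧
        Subgame (extract (interlace A ℓ₂) S₂ D₂) (extract (interlace A p) R₂ C) := by
  classical
  set t : ℕ := ⌈T / 2⌉₊ with ht
  have hceil : 2 * t ≤ ⌈T⌉₊ + 1 := by
    have h1 : (t : ℝ) < T / 2 + 1 := Nat.ceil_lt_add_one (by positivity)
    have h2 : T ≤ (⌈T⌉₊ : ℝ) := Nat.le_ceil T
    have h3 : ((2 * t : ℕ) : ℝ) < ((⌈T⌉₊ + 2 : ℕ) : ℝ) := by push_cast; linarith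
    have h4 : 2 * t < ⌈T⌉₊ + 2 := by exact_mod_cast h3
    omega
  set Q₁ : Finset (Fin p) := Finset.univ.filter (fun γ : Fin p =>
    t ≤ (R₁.filter (fun r : Fin (m * p) =>
      m * (γ : ℕ) ≤ (r : ℕ) ∧ (r : ℕ) < m * ((γ : ℕ) + 1))).card) with hQ1
  have hQ1p : ∀ γ ∈ Q₁, t ≤ (R₁.filter (fun r : Fin (m * p) =>
      m * (γ : ℕ) ≤ (r : ℕ) ∧ (r : ℕ) < m * ((γ : ℕ) + 1))).card := by
    intro γ hγ
    exact (Finset.mem_filter.1 hγ).2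
  have hQ2p : ∀ γ ∈ Q₁ᶜ, t ≤ (R₂.filter (fun r : Fin (m * p) =>
      m * (γ : ℕ) ≤ (r : ℕ) ∧ (r : ℕ) < m * ((γ : ℕ) + 1))).card := by
    intro γ hγ
    have hnotin : γ ∉ Q₁ := Finset.mem_compl.1 hγ
    have hnot : ¬ t ≤ (R₁.filter (fun r : Fin (m * p) =>
        m * (γ : ℕ) ≤ (r : ℕ) ∧ (r : ℕ) < m * ((γ : ℕ) + 1))).card := by
      intro hcon
      exact hnotin (Finset.mem_filter.2 ⟨Finset.mem_univ _, hcon⟩)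
    have hato := hR (γ : ℕ) γ.isLt
    have hunion : R₁.filter (fun r : Fin (m * p) =>
          m * (γ : ℕ) ≤ (r : ℕ) ∧ (r : ℕ) < m * ((γ : ℕ) + 1)) ∪
        R₂.filter (fun r : Fin (m * p) =>
          m * (γ : ℕ) ≤ (r : ℕ) ∧ (r : ℕ) < m * ((γ : ℕ) + 1)) =
        R.filter (fun r : Fin (m * p) =>
          m * (γ : ℕ) ≤ (r : ℕ) ∧ (r : ℕ) < m * ((γ : ℕ) + 1)) := by
      rw [← Finset.filter_union, hpart]
    have hdisj' : Disjoint
        (R₁.filter (fun r : Fin (m * p) =>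
          m * (γ : ℕ) ≤ (r : ℕ) ∧ (r : ℕ) < m * ((γ : ℕ) + 1)))
        (R₂.filter (fun r : Fin (m * p) =>
          m * (γ : ℕ) ≤ (r : ℕ) ∧ (r : ℕ) < m * ((γ : ℕ) + 1))) :=
      hdisj.mono (Finset.filter_subset _ _) (Finset.filter_subset _ _)
    have hcard := Finset.card_union_of_disjoint hdisj'
    rw [hunion, hato] at hcard
    omega
  obtain ⟨S₁, hS₁, hsub₁⟩ := proj_subgame A t R₁ C Q₁ hQ1p
  obtain ⟨S₂, hS₂, hsub₂⟩ := proj_subgame A t R₂ C Q₁ᶜ hQ2p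
  refine ⟨Q₁.card, Q₁ᶜ.card, ?_, S₁, C.image (projFin Q₁), S₂, C.image (projFin Q₁ᶜ),
    hS₁, hS₂, ?_, hsub₁, hsub₂⟩
  · have := Finset.card_add_card_compl Q₁
    simpa using this
  · have hinj : Set.InjOn (fun c : Fin (n ^ p) => (projFin Q₁ c, projFin Q₁ᶜ c)) C := by
      intro c hc c' hc' h
      simp only [Prod.mk.injEq] at h
      apply Fin.ext
      refine eq_of_digits_eq p _ _ c.isLt c'.isLt (fun γ hγ => ?_)
      set γP : Fin p := ⟨γ, hγ⟩ with hγP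
      by_cases hmem : γP ∈ Q₁
      · set e : Fin Q₁.card := (Q₁.orderIsoOfFin rfl).symm ⟨γP, hmem⟩ with he0
        have he : (((Q₁.orderIsoOfFin rfl e) : {x // x ∈ Q₁}) : Fin p) = γP := by
          rw [he0, OrderIso.apply_symm_apply]
        have he' : ((((Q₁.orderIsoOfFin rfl e) : {x // x ∈ Q₁}) : Fin p) : ℕ) = γ :=
          congrArg Fin.val he
        have d1 := projFin_digit Q₁ c e
        have d2 := projFin_digit Q₁ c' e
        rw [he'] at d1 d2
        rw [← d1, ← d2, h.1]
      · have hmem' : γP ∈ Q₁ᶜ := Finset.mem_compl.2 hmem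
        set e : Fin Q₁ᶜ.card := (Q₁ᶜ.orderIsoOfFin rfl).symm ⟨γP, hmem'⟩ with he0
        have he : (((Q₁ᶜ.orderIsoOfFin rfl e) : {x // x ∈ Q₁ᶜ}) : Fin p) = γP := by
          rw [he0, OrderIso.apply_symm_apply]
        have he' : ((((Q₁ᶜ.orderIsoOfFin rfl e) : {x // x ∈ Q₁ᶜ}) : Fin p) : ℕ) = γ :=
          congrArg Fin.val he
        have d1 := projFin_digit Q₁ᶜ c e
        have d2 := projFin_digit Q₁ᶜ c' e
        rw [he'] at d1 d2
        rw [← d1, ← d2, h.2]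
    have hmaps : ∀ c ∈ C, (projFin Q₁ c, projFin Q₁ᶜ c) ∈
        (C.image (projFin Q₁)) ×ˢ (C.image (projFin Q₁ᶜ)) := by
      intro c hc
      exact Finset.mem_product.2 ⟨Finset.mem_image_of_mem _ hc, Finset.mem_image_of_mem _ hc⟩
    have := Finset.card_le_card_of_injOn _ hmaps hinj
    rwa [Finset.card_product] at this
end

section
/- Let n, p, ℓ be positive integers with 1 ≤ ℓ ≤ p, let U = {1,…,n} × {1,…,p}, and let 𝐅 be a (finite) collection of subsets of U. Then there exists a subset p' ⊆ {1,…,p} with |p'| = ℓ such that, setting A_{p'} = { (λ,γ) : λ ∈ {1,…,n}, γ ∈ p' } and 𝐅_{A_{p'}} = { F ∩ A_{p'} : F ∈ 𝐅 }, one has |𝐅|^{ℓ/p} ≤ |𝐅_{A_{p'}}|. -/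
section ShearerAux

open Finset NNReal

open Finset NNReal


lemma holder_k {V ι : Type*} (Vs : Finset V) (K : Finset ι) (k : ℕ) (hk : 0 < k)
    (hK : K.card = k) (D : ℝ≥0) (a : ι → V → ℝ≥0) (b : V → ℝ≥0)
    (hb : ∀ v ∈ Vs, b v ^ k ≤ D * ∏ i ∈ K, a i v) :
    (∑ v ∈ Vs, b v) ^ k ≤ D * ∏ i ∈ K, ∑ v ∈ Vs, a i v := by
  by_cases h0 : D * ∏ i ∈ K, ∑ v ∈ Vs, a i v = 0
  · rw [h0]
    have hb0 : ∀ v ∈ Vs, b v = 0 := by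
      intro v hv
      have := hb v hv
      rcases mul_eq_zero.1 h0 with hD | hP
      · rw [hD, zero_mul] at this
        exact pow_eq_zero_iff hk.ne' |>.1 (le_antisymm this zero_le)
      · obtain ⟨i, hi, hA⟩ := prod_eq_zero_iff.1 hP
        have hav : a i v = 0 := (sum_eq_zero_iff.1 hA) v hv
        have hz : ∏ j ∈ K, a j v = 0 := prod_eq_zero hi hav
        rw [hz, mul_zero] at this
        exact pow_eq_zero_iff hk.ne' |>.1 (le_antisymm this zero_le)
    rw [sum_eq_zero hb0, zero_pow hk.ne']
  · -- all positive
    have hD : D ≠ 0 := fun h => h0 (by rw [h, zero_mul])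
    have hA : ∀ i ∈ K, (∑ v ∈ Vs, a i v) ≠ 0 := by
      intro i hi h
      exact h0 (by rw [prod_eq_zero hi h, mul_zero])
    set A : ι → ℝ≥0 := fun i => ∑ v ∈ Vs, a i v with hAdef
    -- b v ≤ D^(1/k) * ∏ (a i v)^(1/k)
    have key : ∀ v ∈ Vs, b v ≤ D ^ ((k:ℝ)⁻¹) * ∏ i ∈ K, (a i v) ^ ((k:ℝ)⁻¹) := by
      intro v hv
      have h1 : (b v ^ k : ℝ≥0) ^ ((k:ℝ)⁻¹) ≤ (D * ∏ i ∈ K, a i v) ^ ((k:ℝ)⁻¹) :=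
        NNReal.rpow_le_rpow (hb v hv) (by positivity)
      have h2 : (b v ^ k : ℝ≥0) ^ ((k:ℝ)⁻¹) = b v := by
        rw [← NNReal.rpow_natCast (b v) k, ← NNReal.rpow_mul,
          mul_inv_cancel₀ (by exact_mod_cast hk.ne'), NNReal.rpow_one]
      rw [h2] at h1
      refine h1.trans (le_of_eq ?_)
      rw [NNReal.mul_rpow]
      congr 1
      exact (NNReal.finset_prod_rpow K _ _).symm ▸ rfl
    have amgm : ∀ v ∈ Vs, ∏ i ∈ K, (a i v / A i) ^ ((k:ℝ)⁻¹) ≤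
        ∑ i ∈ K, (k:ℝ≥0)⁻¹ * (a i v / A i) := by
      intro v _
      have := NNReal.geom_mean_le_arith_mean_weighted K (fun _ => (k:ℝ≥0)⁻¹)
        (fun i => a i v / A i) (by
          rw [Finset.sum_const, hK, nsmul_eq_mul]
          exact mul_inv_cancel₀ (by exact_mod_cast hk.ne'))
      simpa using this
    have hsplit : ∀ v, ∏ i ∈ K, (a i v) ^ ((k:ℝ)⁻¹) =
        (∏ i ∈ K, (a i v / A i) ^ ((k:ℝ)⁻¹)) * ∏ i ∈ K, (A i) ^ ((k:ℝ)⁻¹) := by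
      intro v
      rw [← Finset.prod_mul_distrib]
      refine Finset.prod_congr rfl fun i hi => ?_
      rw [← NNReal.mul_rpow, div_mul_cancel₀ _ (hA i hi)]
    have hsum1 : ∑ v ∈ Vs, ∑ i ∈ K, (k:ℝ≥0)⁻¹ * (a i v / A i) = 1 := by
      rw [Finset.sum_comm]
      have : ∀ i ∈ K, ∑ v ∈ Vs, (k:ℝ≥0)⁻¹ * (a i v / A i) = (k:ℝ≥0)⁻¹ := by
        intro i hi
        rw [← Finset.mul_sum]
        have : ∑ v ∈ Vs, a i v / A i = 1 := by
          rw [← Finset.sum_div, div_self (hA i hi)]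
        rw [this, mul_one]
      rw [Finset.sum_congr rfl this, Finset.sum_const, hK, nsmul_eq_mul]
      exact mul_inv_cancel₀ (by exact_mod_cast hk.ne')
    have hS : ∑ v ∈ Vs, ∏ i ∈ K, (a i v) ^ ((k:ℝ)⁻¹) ≤ ∏ i ∈ K, (A i) ^ ((k:ℝ)⁻¹) := by
      calc ∑ v ∈ Vs, ∏ i ∈ K, (a i v) ^ ((k:ℝ)⁻¹)
          = ∑ v ∈ Vs, (∏ i ∈ K, (a i v / A i) ^ ((k:ℝ)⁻¹)) * ∏ i ∈ K, (A i) ^ ((k:ℝ)⁻¹) := by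
            exact Finset.sum_congr rfl fun v _ => hsplit v
        _ = (∑ v ∈ Vs, ∏ i ∈ K, (a i v / A i) ^ ((k:ℝ)⁻¹)) * ∏ i ∈ K, (A i) ^ ((k:ℝ)⁻¹) := by
            rw [Finset.sum_mul]
        _ ≤ (∑ v ∈ Vs, ∑ i ∈ K, (k:ℝ≥0)⁻¹ * (a i v / A i)) * ∏ i ∈ K, (A i) ^ ((k:ℝ)⁻¹) := by
            exact mul_le_mul_left (Finset.sum_le_sum amgm) _
        _ = ∏ i ∈ K, (A i) ^ ((k:ℝ)⁻¹) := by rw [hsum1, one_mul]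
    have hfin : ∑ v ∈ Vs, b v ≤ D ^ ((k:ℝ)⁻¹) * ∏ i ∈ K, (A i) ^ ((k:ℝ)⁻¹) :=
      calc ∑ v ∈ Vs, b v ≤ ∑ v ∈ Vs, D ^ ((k:ℝ)⁻¹) * ∏ i ∈ K, (a i v) ^ ((k:ℝ)⁻¹) :=
            Finset.sum_le_sum key
        _ = D ^ ((k:ℝ)⁻¹) * ∑ v ∈ Vs, ∏ i ∈ K, (a i v) ^ ((k:ℝ)⁻¹) := by
            rw [Finset.mul_sum]
        _ ≤ _ := mul_le_mul_right hS _
    calc (∑ v ∈ Vs, b v) ^ k ≤ (D ^ ((k:ℝ)⁻¹) * ∏ i ∈ K, (A i) ^ ((k:ℝ)⁻¹)) ^ k :=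
          pow_le_pow_left' hfin k
      _ = D * ∏ i ∈ K, A i := by
          rw [mul_pow, ← NNReal.rpow_natCast (D ^ ((k:ℝ)⁻¹)) k, ← NNReal.rpow_mul,
            inv_mul_cancel₀ (by exact_mod_cast hk.ne' : (k:ℝ) ≠ 0), NNReal.rpow_one,
            ← Finset.prod_pow]
          congr 1
          refine Finset.prod_congr rfl fun i _ => ?_
          rw [← NNReal.rpow_natCast ((A i) ^ ((k:ℝ)⁻¹)) k, ← NNReal.rpow_mul,
            inv_mul_cancel₀ (by exact_mod_cast hk.ne' : (k:ℝ) ≠ 0), NNReal.rpow_one]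


variable {n p : ℕ}

private def tr (Q : Finset (Fin p)) (F : Finset (Finset (Fin n × Fin p))) :
    Finset (Finset (Fin n × Fin p)) :=
  F.image (fun s => s.filter (fun u => u.2 ∈ Q))

private lemma shearer {ι : Type} [DecidableEq ι] (k : ℕ) (hk : 0 < k)
    (V : Finset (Fin p)) :
    ∀ (F : Finset (Finset (Fin n × Fin p))),
      (∀ s ∈ F, ∀ u ∈ s, (u : Fin n × Fin p).2 ∈ V) →
      ∀ (I : Finset ι) (A : ι → Finset (Fin p)),
        (∀ x ∈ V, k ≤ (I.filter (fun i => x ∈ A i)).card) →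
        ((F.card : ℝ≥0)) ^ k ≤ ∏ i ∈ I, ((tr (A i) F).card : ℝ≥0) := by
  induction V using Finset.induction_on with
  | empty =>
    intro F hF I A _
    have hF1 : F.card ≤ 1 := by
      have hsub : F ⊆ {∅} := by
        intro s hs
        simp only [mem_singleton]
        ext u
        simp only [Finset.notMem_empty, iff_false]
        intro hu
        exact absurd (hF s hs u hu) (by simp)
      exact (card_le_card hsub).trans (by simp)
    rcases Nat.le_one_iff_eq_zero_or_eq_one.1 hF1 with h | h
    · rw [h]
      simp only [Nat.cast_zero, zero_pow hk.ne']
      exact zero_le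
    · obtain ⟨s, hs⟩ := card_eq_one.1 h
      rw [h]
      simp only [Nat.cast_one, one_pow]
      rw [show (1:ℝ≥0) = ∏ _i ∈ I, (1:ℝ≥0) by simp]
      refine prod_le_prod ?_ ?_
      · intro i _; exact zero_le
      · intro i _
        have : (tr (A i) F).card = 1 := by
          rw [hs]
          simp [tr]
        rw [this]; norm_num
  | @insert x V hx IH =>
    intro F hF I A hcov
    classical
    set Vals : Finset (Finset (Fin n × Fin p)) :=
      F.image (fun s => s.filter (fun u => u.2 = x)) with hVals
    set Fv : Finset (Fin n × Fin p) → Finset (Finset (Fin n × Fin p)) :=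
      fun v => F.filter (fun s => s.filter (fun u => u.2 = x) = v) with hFv
    set G : Finset (Fin n × Fin p) → Finset (Finset (Fin n × Fin p)) :=
      fun v => (Fv v).image (fun s => s.filter (fun u => u.2 ≠ x)) with hG
    -- the x-part of every member of Vals
    have hv_x : ∀ v ∈ Vals, ∀ u ∈ v, (u : Fin n × Fin p).2 = x := by
      intro v hv u hu
      obtain ⟨s, _, rfl⟩ := mem_image.1 hv
      exact (mem_filter.1 hu).2
    -- members of traces of G v have second coordinate ≠ x
    have ht_nx : ∀ (Q : Finset (Fin p)) (v : Finset (Fin n × Fin p)),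
        ∀ t ∈ tr Q (G v), ∀ u ∈ t, (u : Fin n × Fin p).2 ≠ x := by
      intro Q v t ht u hu
      obtain ⟨w, hw, rfl⟩ := mem_image.1 ht
      obtain ⟨s, _, rfl⟩ := mem_image.1 hw
      exact (mem_filter.1 (mem_filter.1 hu).1).2
    -- partition of the count
    have h_card_split : F.card = ∑ v ∈ Vals, (Fv v).card :=
      card_eq_sum_card_fiberwise (fun s hs => mem_image_of_mem _ hs)
    have hGcard : ∀ v, (G v).card = (Fv v).card := by
      intro v
      refine card_image_of_injOn ?_
      intro s hs s' hs' hss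
      have h1 := (mem_filter.1 hs).2
      have h2 := (mem_filter.1 hs').2
      have key : ∀ r : Finset (Fin n × Fin p),
          r = r.filter (fun u => u.2 = x) ∪ r.filter (fun u => u.2 ≠ x) :=
        fun r => (filter_union_filter_not_eq _ r).symm
      rw [key s, key s', h1, h2]
      simp only at hss
      rw [hss]
    have hGsupp : ∀ v, ∀ t ∈ G v, ∀ u ∈ t, (u : Fin n × Fin p).2 ∈ V := by
      intro v t ht u hu
      obtain ⟨s, hs, rfl⟩ := mem_image.1 ht
      have hu' := mem_filter.1 hu
      have := hF s (mem_filter.1 hs).1 u hu'.1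
      rcases mem_insert.1 this with h | h
      · exact absurd h hu'.2
      · exact h
    have hIH : ∀ v, ((G v).card : ℝ≥0) ^ k ≤ ∏ i ∈ I, ((tr (A i) (G v)).card : ℝ≥0) :=
      fun v => IH (G v) (hGsupp v) I A (fun y hy => hcov y (mem_insert_of_mem hy))
    -- comparison of traces, case x ∈ A i
    have hmaps : ∀ i, x ∈ A i → ∀ v ∈ Vals, ∀ t ∈ tr (A i) (G v),
        t ∪ v ∈ tr (A i) F := by
      intro i hxi v hv t ht
      obtain ⟨w, hw, rfl⟩ := mem_image.1 ht
      obtain ⟨s, hs, rfl⟩ := mem_image.1 hw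
      have hev : s.filter (fun u => u.2 = x) = v := (mem_filter.1 hs).2
      refine mem_image.2 ⟨s, (mem_filter.1 hs).1, ?_⟩
      subst hev
      ext u
      simp only [mem_union, mem_filter]
      constructor
      · rintro ⟨hus, hA⟩
        by_cases h : u.2 = x
        · exact Or.inr ⟨hus, h⟩
        · exact Or.inl ⟨⟨hus, h⟩, hA⟩
      · rintro (⟨⟨hus, _⟩, hA⟩ | ⟨hus, hux⟩)
        · exact ⟨hus, hA⟩
        · exact ⟨hus, by rw [hux]; exact hxi⟩
    have hinj : ∀ i, ∀ v ∈ Vals, Set.InjOn (· ∪ v) (tr (A i) (G v)) := by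
      intro i v hv t1 ht1 t2 ht2 h12
      have hrec : ∀ t ∈ tr (A i) (G v), (t ∪ v).filter (fun u => u.2 ≠ x) = t := by
        intro t ht
        ext u
        simp only [mem_filter, mem_union]
        constructor
        · rintro ⟨hu | hu, hux⟩
          · exact hu
          · exact absurd (hv_x v hv u hu) hux
        · intro hu
          exact ⟨Or.inl hu, ht_nx _ v t ht u hu⟩
      rw [← hrec t1 ht1, ← hrec t2 ht2]
      simp only at h12
      rw [h12]
    have hxpart : ∀ i, ∀ v ∈ Vals, ∀ t ∈ tr (A i) (G v),
        (t ∪ v).filter (fun u => u.2 = x) = v := by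
      intro i v hv t ht
      ext u
      simp only [mem_filter, mem_union]
      constructor
      · rintro ⟨hu | hu, hux⟩
        · exact absurd hux (ht_nx _ v t ht u hu)
        · exact hu
      · intro hu
        exact ⟨Or.inr hu, hv_x v hv u hu⟩
    have hsubset : ∀ i, x ∉ A i → ∀ v ∈ Vals, tr (A i) (G v) ⊆ tr (A i) F := by
      intro i hxi v hv t ht
      obtain ⟨w, hw, rfl⟩ := mem_image.1 ht
      obtain ⟨s, hs, rfl⟩ := mem_image.1 hw
      refine mem_image.2 ⟨s, (mem_filter.1 hs).1, ?_⟩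
      ext u
      simp only [mem_filter]
      constructor
      · rintro ⟨hus, hA⟩
        refine ⟨⟨hus, ?_⟩, hA⟩
        intro h
        exact hxi (h ▸ hA)
      · rintro ⟨⟨hus, _⟩, hA⟩
        exact ⟨hus, hA⟩
      
    have ha_le : ∀ i ∈ I, ∀ v ∈ Vals, (tr (A i) (G v)).card ≤ (tr (A i) F).card := by
      intro i _ v hv
      by_cases hxi : x ∈ A i
      · exact card_le_card_of_injOn _ (hmaps i hxi v hv) (hinj i v hv)
      · exact card_le_card (hsubset i hxi v hv)
    have hsum_le : ∀ i, x ∈ A i →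
        ∑ v ∈ Vals, (tr (A i) (G v)).card ≤ (tr (A i) F).card := by
      intro i hxi
      have hdisj : ∀ v1 ∈ Vals, ∀ v2 ∈ Vals, v1 ≠ v2 →
          Disjoint ((tr (A i) (G v1)).image (· ∪ v1)) ((tr (A i) (G v2)).image (· ∪ v2)) := by
        intro v1 h1 v2 h2 hne
        refine disjoint_left.2 ?_
        intro w hw1 hw2
        obtain ⟨t1, ht1, rfl⟩ := mem_image.1 hw1
        obtain ⟨t2, ht2, h22⟩ := mem_image.1 hw2
        apply hne
        rw [← hxpart i v1 h1 t1 ht1, ← hxpart i v2 h2 t2 ht2, h22]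
      calc ∑ v ∈ Vals, (tr (A i) (G v)).card
          = ∑ v ∈ Vals, ((tr (A i) (G v)).image (· ∪ v)).card := by
            refine sum_congr rfl fun v hv => ?_
            rw [card_image_of_injOn (hinj i v hv)]
        _ = (Vals.biUnion (fun v => (tr (A i) (G v)).image (· ∪ v))).card :=
            (card_biUnion hdisj).symm
        _ ≤ (tr (A i) F).card := by
            refine card_le_card (biUnion_subset.2 fun v hv => ?_)
            refine image_subset_iff.2 fun t ht => hmaps i hxi v hv t ht
    obtain ⟨K, hKsub, hKcard⟩ := Finset.exists_subset_card_eq (hcov x (mem_insert_self x V))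
    have hKI : K ⊆ I := hKsub.trans (filter_subset _ _)
    have hKx : ∀ i ∈ K, x ∈ A i := fun i hi => (mem_filter.1 (hKsub hi)).2
    set D : ℝ≥0 := ∏ i ∈ I \ K, ((tr (A i) F).card : ℝ≥0) with hD
    have hb : ∀ v ∈ Vals,
        ((G v).card : ℝ≥0) ^ k ≤ D * ∏ i ∈ K, ((tr (A i) (G v)).card : ℝ≥0) := by
      intro v hv
      refine (hIH v).trans ?_
      rw [← Finset.prod_sdiff hKI]
      refine mul_le_mul_left ?_ _
      exact prod_le_prod (fun _ _ => zero_le)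
        (fun i hi => Nat.cast_le.2 (ha_le i (mem_sdiff.1 hi).1 v hv))
    have hHolder := holder_k Vals K k hk hKcard D _ _ hb
    have hFsum : ((F.card : ℝ≥0)) = ∑ v ∈ Vals, ((G v).card : ℝ≥0) := by
      rw [h_card_split]
      push_cast
      exact sum_congr rfl fun v _ => by rw [hGcard v]
    rw [hFsum]
    refine hHolder.trans ?_
    rw [← Finset.prod_sdiff hKI]
    refine mul_le_mul_right ?_ D
    refine prod_le_prod (fun _ _ => zero_le) fun i hi => ?_
    have hle := hsum_le i (hKx i hi)
    calc ∑ v ∈ Vals, ((tr (A i) (G v)).card : ℝ≥0)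
        = ((∑ v ∈ Vals, (tr (A i) (G v)).card : ℕ) : ℝ≥0) := by push_cast; rfl
      _ ≤ _ := Nat.cast_le.2 hle

end ShearerAux

open Finset NNReal Fin.NatCast in
theorem product_theorem_corollary (n p ℓ : ℕ) (hn : 0 < n) (hℓ : 1 ≤ ℓ) (hℓp : ℓ ≤ p)
    (F : Finset (Finset (Fin n × Fin p))) :
    ∃ p' : Finset (Fin p), p'.card = ℓ ∧
      (F.card : ℝ) ^ ((ℓ : ℝ) / (p : ℝ)) ≤
        ((F.image (fun s => s.filter (fun u : Fin n × Fin p => u.2 ∈ p'))).card : ℝ) := by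
  have hp : 0 < p := hℓ.trans hℓp
  haveI : NeZero p := ⟨hp.ne'⟩
  set A : Fin p → Finset (Fin p) :=
    fun i => (Finset.range ℓ).image (fun t : ℕ => i + (t : Fin p)) with hA
  have hAcard : ∀ i, (A i).card = ℓ := by
    intro i
    rw [hA]
    rw [Finset.card_image_of_injOn, Finset.card_range]
    intro t1 h1 t2 h2 h12
    simp only at h12
    have h1' := Finset.mem_range.1 h1
    have h2' := Finset.mem_range.1 h2
    have hc : (t1 : Fin p) = t2 := add_left_cancel h12
    have := congrArg Fin.val hc
    rwa [Fin.val_cast_of_lt (h1'.trans_le hℓp), Fin.val_cast_of_lt (h2'.trans_le hℓp)] at this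
  have hcov : ∀ x : Fin p, x ∈ (univ : Finset (Fin p)) →
      ℓ ≤ ((univ : Finset (Fin p)).filter (fun i => x ∈ A i)).card := by
    intro x _
    have hsub : (Finset.range ℓ).image (fun t : ℕ => x - (t : Fin p)) ⊆
        (univ.filter (fun i => x ∈ A i)) := by
      intro i hi
      obtain ⟨t, ht, rfl⟩ := Finset.mem_image.1 hi
      refine Finset.mem_filter.2 ⟨Finset.mem_univ _, ?_⟩
      refine Finset.mem_image.2 ⟨t, ht, ?_⟩
      exact sub_add_cancel x t
    calc ℓ = ((Finset.range ℓ).image (fun t : ℕ => x - (t : Fin p))).card := by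
          rw [Finset.card_image_of_injOn, Finset.card_range]
          intro t1 h1 t2 h2 h12
          simp only at h12
          have hc : (t1 : Fin p) = t2 := by
            have := sub_right_inj.1 h12
            exact this
          have h1' := Finset.mem_range.1 h1
          have h2' := Finset.mem_range.1 h2
          have := congrArg Fin.val hc
          rwa [Fin.val_cast_of_lt (h1'.trans_le hℓp),
            Fin.val_cast_of_lt (h2'.trans_le hℓp)] at this
      _ ≤ _ := card_le_card hsub
  have hsh := shearer (ι := Fin p) ℓ hℓ univ F (fun s _ u _ => mem_univ _) univ A hcov
  obtain ⟨i₀, _, hmax⟩ := Finset.exists_max_image (univ : Finset (Fin p))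
    (fun i => (tr (A i) F).card) ⟨0, mem_univ 0⟩
  have hprod : ∏ i ∈ (univ : Finset (Fin p)), ((tr (A i) F).card : ℝ≥0) ≤
      ((tr (A i₀) F).card : ℝ≥0) ^ p := by
    calc ∏ i ∈ (univ : Finset (Fin p)), ((tr (A i) F).card : ℝ≥0)
        ≤ ∏ _i ∈ (univ : Finset (Fin p)), ((tr (A i₀) F).card : ℝ≥0) :=
          prod_le_prod (fun _ _ => zero_le)
            (fun i hi => Nat.cast_le.2 (hmax i (mem_univ i)))
      _ = _ := by rw [prod_const, card_univ, Fintype.card_fin]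
  have hR : ((F.card : ℝ)) ^ ℓ ≤ ((tr (A i₀) F).card : ℝ) ^ p := by
    exact_mod_cast hsh.trans hprod
  refine ⟨A i₀, hAcard i₀, ?_⟩
  have heq : (F.image (fun s => s.filter (fun u : Fin n × Fin p => u.2 ∈ A i₀))) =
      tr (A i₀) F := rfl
  rw [heq]
  have ha : (0:ℝ) ≤ (F.card : ℝ) := Nat.cast_nonneg _
  have hb : (0:ℝ) ≤ ((tr (A i₀) F).card : ℝ) := Nat.cast_nonneg _
  calc (F.card : ℝ) ^ ((ℓ : ℝ) / (p : ℝ))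
      = ((F.card : ℝ) ^ (ℓ : ℕ)) ^ ((p:ℝ)⁻¹) := by
        rw [div_eq_mul_inv, Real.rpow_mul ha, Real.rpow_natCast]
    _ ≤ (((tr (A i₀) F).card : ℝ) ^ (p : ℕ)) ^ ((p:ℝ)⁻¹) :=
        Real.rpow_le_rpow (pow_nonneg ha ℓ) hR (by positivity)
    _ = ((tr (A i₀) F).card : ℝ) := by
        rw [← Real.rpow_natCast ((tr (A i₀) F).card : ℝ) p, ← Real.rpow_mul hb,
          mul_inv_cancel₀ (by exact_mod_cast hp.ne' : (p:ℝ) ≠ 0), Real.rpow_one]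
end
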